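/- arXiv:2412.11454 — 3 statements merged into one kernel-verified Lean document; each statement's English description precedes it below -/
import Mathlib

section
/- Under the SISO discrete-time adaptive law setup with |k_p| · xᵀ Γ x < 2 xᵀ x for all nonzero x ∈ ℝ^N, the parameter estimates are uniformly bounded: sup_{t ∈ ℕ} ‖θ(t)‖ < ∞ and sup_{t ∈ ℕ} |ρ(t)| < ∞ (i.e. θ ∈ L^∞ and ρ ∈ L^∞). -/
open Matrix

/-! With `φ = θ - θ*` and `ψ = ρ - k_p`, the function `V = |k_p| φᵀ Γ⁻¹ φ + ψ² / γ` is
nonincreasing along the adaptive law: since `ε = k_p φᵀζ + ψ ξ`, one step changes it by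
`-(ε / m²)² (2 m² - |k_p| ζᵀ Γ ζ - γ ξ²) ≤ 0`. Moreover `|k_p| Γ ≤ 2 I` implies
`Γ⁻¹ ≥ (|k_p| / 2) I`, so `V` bounds both `‖φ‖²` and `ψ²`. -/

theorem Real.sign_mul_abs (r : ℝ) : Real.sign r * |r| = r := by
  rcases lt_trichotomy r 0 with h | rfl | h
  · rw [Real.sign_of_neg h, abs_of_neg h, neg_one_mul, neg_neg]
  · rw [abs_zero, mul_zero]
  · rw [Real.sign_of_pos h, abs_of_pos h, one_mul]

theorem Real.sign_sq_of_ne_zero {r : ℝ} (hr : r ≠ 0) : Real.sign r ^ 2 = 1 := by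
  rcases Real.sign_apply_eq_of_ne_zero r hr with h | h <;> rw [h] <;> norm_num

theorem sq_norm_le_dotProduct_self {n : Type*} [Fintype n] (x : n → ℝ) : ‖x‖ ^ 2 ≤ x ⬝ᵥ x := by
  have hx : 0 ≤ x ⬝ᵥ x := Finset.sum_nonneg fun i _ => mul_self_nonneg (x i)
  suffices ‖x‖ ≤ √(x ⬝ᵥ x) from (Real.le_sqrt (norm_nonneg x) hx).mp this
  refine (pi_norm_le_iff_of_nonneg (Real.sqrt_nonneg _)).mpr fun i => Real.abs_le_sqrt ?_
  simpa only [sq, dotProduct] using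
    Finset.single_le_sum (fun j _ => mul_self_nonneg (x j)) (Finset.mem_univ i)

theorem exists_forall_norm_le_of_sq_norm_sub_le {ι E : Type*} [SeminormedAddGroup E] {f : ι → E}
    (c : E) {B : ℝ} (h : ∀ t, ‖f t - c‖ ^ 2 ≤ B) : ∃ C, ∀ t, ‖f t‖ ≤ C :=
  ⟨√B + ‖c‖, fun t => (norm_le_norm_sub_add (f t) c).trans <|
    add_le_add_left (Real.le_sqrt_of_sq_le (h t)) _⟩

namespace Matrix

variable {n R : Type*} [Fintype n] [DecidableEq n]

theorem IsSymm.dotProduct_inv_mulVec_sub_smul_mulVec [CommRing R] {A : Matrix n n R}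
    (hA : A.IsSymm) (hU : IsUnit A) (x y : n → R) (c : R) :
    (x - c • A *ᵥ y) ⬝ᵥ A⁻¹ *ᵥ (x - c • A *ᵥ y)
      = x ⬝ᵥ A⁻¹ *ᵥ x - 2 * c * (x ⬝ᵥ y) + c ^ 2 * (y ⬝ᵥ A *ᵥ y) := by
  have hinv : A⁻¹ *ᵥ (A *ᵥ y) = y := by
    rw [mulVec_mulVec, nonsing_inv_mul _ ((isUnit_iff_isUnit_det A).mp hU), one_mulVec]
  have hcross : (A *ᵥ y) ⬝ᵥ A⁻¹ *ᵥ x = x ⬝ᵥ y := by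
    rw [dotProduct_mulVec, ← mulVec_transpose, hA.inv.eq, hinv, dotProduct_comm]
  rw [mulVec_sub, mulVec_smul, hinv, sub_dotProduct, dotProduct_sub, dotProduct_sub,
    smul_dotProduct, smul_dotProduct, dotProduct_smul, dotProduct_smul, hcross,
    dotProduct_comm (A *ᵥ y) y]
  simp only [smul_eq_mul]
  ring

theorem PosDef.mul_dotProduct_self_le_dotProduct_inv_mulVec {A : Matrix n n ℝ} (hA : A.PosDef)
    {c : ℝ} (hc : 0 ≤ c) (h : ∀ x, c * (x ⬝ᵥ A *ᵥ x) ≤ x ⬝ᵥ x) (x : n → ℝ) :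
    c * (x ⬝ᵥ x) ≤ x ⬝ᵥ A⁻¹ *ᵥ x := by
  have hsymm : A.IsSymm := isHermitian_iff_isSymm.mp hA.isHermitian
  have hdet : IsUnit A.det := (isUnit_iff_isUnit_det A).mp hA.isUnit
  -- expand `0 ≤ zᵀ A z` for `z = c x - A⁻¹ x`
  have hexpand := hsymm.inv.dotProduct_inv_mulVec_sub_smul_mulVec
    ((isUnit_iff_isUnit_det _).mpr (isUnit_nonsing_inv_det A hdet)) (c • x) x 1
  simp only [nonsing_inv_nonsing_inv A hdet, one_smul, mulVec_smul, smul_dotProduct,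
    dotProduct_smul, smul_eq_mul] at hexpand
  have hnonneg : 0 ≤ (c • x - A⁻¹ *ᵥ x) ⬝ᵥ A *ᵥ (c • x - A⁻¹ *ᵥ x) := by
    simpa using hA.posSemidef.dotProduct_mulVec_nonneg (c • x - A⁻¹ *ᵥ x)
  linarith [mul_le_mul_of_nonneg_left (h x) hc]

end Matrix

section AdaptiveLaw

variable {n : Type*} [Fintype n] [DecidableEq n]

noncomputable def adaptiveLyapunov (kp γ : ℝ) (Γ : Matrix n n ℝ) (φ : n → ℝ) (ψ : ℝ) : ℝ :=
  |kp| * (φ ⬝ᵥ Γ⁻¹ *ᵥ φ) + ψ ^ 2 / γ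

theorem adaptiveLyapunov_update_le {kp γ M ε ψ ξ : ℝ} {Γ : Matrix n n ℝ} {φ ζ : n → ℝ}
    (hΓ : Γ.IsSymm) (hU : IsUnit Γ) (hkp : kp ≠ 0) (hγ : γ ≠ 0) (hM : M ≠ 0)
    (hS : |kp| * (ζ ⬝ᵥ Γ *ᵥ ζ) + γ * ξ ^ 2 ≤ 2 * M)
    (hε : ε = kp * (φ ⬝ᵥ ζ) + ψ * ξ) :
    adaptiveLyapunov kp γ Γ (φ - (Real.sign kp * ε / M) • Γ *ᵥ ζ) (ψ - γ * ξ * ε / M)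
      ≤ adaptiveLyapunov kp γ Γ φ ψ := by
  have hεa : ε = ε / M * M := (div_mul_cancel₀ ε hM).symm
  rw [mul_div_assoc, mul_div_assoc]
  generalize ε / M = a at hεa ⊢
  have hψ : (ψ - γ * ξ * a) ^ 2 / γ = ψ ^ 2 / γ - 2 * a * (ψ * ξ) + a ^ 2 * (γ * ξ ^ 2) := by
    field_simp
    ring
  have hdecrease : adaptiveLyapunov kp γ Γ (φ - (Real.sign kp * a) • Γ *ᵥ ζ) (ψ - γ * ξ * a)
      = adaptiveLyapunov kp γ Γ φ ψ - a ^ 2 * (2 * M - (|kp| * (ζ ⬝ᵥ Γ *ᵥ ζ) + γ * ξ ^ 2)) := by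
    rw [adaptiveLyapunov, adaptiveLyapunov, hΓ.dotProduct_inv_mulVec_sub_smul_mulVec hU, hψ]
    linear_combination (-2 * a * (φ ⬝ᵥ ζ)) * Real.sign_mul_abs kp
      + (|kp| * a ^ 2 * (ζ ⬝ᵥ Γ *ᵥ ζ)) * Real.sign_sq_of_ne_zero hkp - 2 * a * hεa + 2 * a * hε
  rw [hdecrease, sub_le_self_iff]
  exact mul_nonneg (sq_nonneg a) (sub_nonneg.mpr hS)

theorem sq_le_mul_adaptiveLyapunov {kp γ ψ : ℝ} {Γ : Matrix n n ℝ} {φ : n → ℝ} (hγ : 0 < γ)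
    (hφ : 0 ≤ φ ⬝ᵥ Γ⁻¹ *ᵥ φ) : ψ ^ 2 ≤ γ * adaptiveLyapunov kp γ Γ φ ψ := by
  rw [adaptiveLyapunov, mul_add, mul_div_cancel₀ _ hγ.ne', le_add_iff_nonneg_left]
  exact mul_nonneg hγ.le (mul_nonneg (abs_nonneg kp) hφ)

theorem sq_norm_le_adaptiveLyapunov_div {kp γ ψ c : ℝ} {Γ : Matrix n n ℝ} {φ : n → ℝ}
    (hkp : kp ≠ 0) (hc : 0 < c) (hγ : 0 ≤ γ) (hφ : c * (φ ⬝ᵥ φ) ≤ φ ⬝ᵥ Γ⁻¹ *ᵥ φ) :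
    ‖φ‖ ^ 2 ≤ adaptiveLyapunov kp γ Γ φ ψ / (|kp| * c) := by
  have hkc : 0 < |kp| * c := mul_pos (abs_pos.mpr hkp) hc
  rw [le_div_iff₀ hkc, adaptiveLyapunov]
  have := mul_le_mul_of_nonneg_left hφ (abs_nonneg kp)
  have := mul_le_mul_of_nonneg_left (sq_norm_le_dotProduct_self φ) hkc.le
  have : 0 ≤ ψ ^ 2 / γ := by positivity
  linarith

end AdaptiveLaw

theorem siso_discrete_adaptive_law_parameter_boundedness_general
    (N : ℕ)
    (ζ : ℕ → Fin N → ℝ) (ξ : ℕ → ℝ)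
    (kp : ℝ) (hkp : kp ≠ 0)
    (θs : Fin N → ℝ)
    (Γ : Matrix (Fin N) (Fin N) ℝ) (hΓ : Γ.PosDef)
    (hΓ2 : ∀ x : Fin N → ℝ, x ≠ 0 →
      |kp| * (∑ i, x i * (Γ.mulVec x) i) < 2 * ∑ i, x i * x i)
    (γ : ℝ) (hγ1 : 0 < γ) (hγ2 : γ < 2)
    (θ : ℕ → Fin N → ℝ) (ρ : ℕ → ℝ)
    (m ε : ℕ → ℝ)
    (hm : ∀ t, m t = Real.sqrt (1 + (∑ i, ζ t i * ζ t i) + ξ t ^ 2))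
    (hε : ∀ t, ε t = kp * (∑ i, (θ t i - θs i) * ζ t i) + (ρ t - kp) * ξ t)
    (hθ : ∀ t, θ (t + 1) = θ t - (Real.sign kp * ε t / m t ^ 2) • Γ.mulVec (ζ t))
    (hρ : ∀ t, ρ (t + 1) = ρ t - γ * ξ t * ε t / m t ^ 2) :
    (∃ C : ℝ, ∀ t, ‖θ t‖ ≤ C) ∧ (∃ C : ℝ, ∀ t, |ρ t| ≤ C) := by
  have hΓle : ∀ x, |kp| * (x ⬝ᵥ Γ *ᵥ x) ≤ 2 * (x ⬝ᵥ x) := fun x => by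
    rcases eq_or_ne x 0 with rfl | hx
    · simp
    · exact (hΓ2 x hx).le
  have hinv : ∀ x, |kp| / 2 * (x ⬝ᵥ x) ≤ x ⬝ᵥ Γ⁻¹ *ᵥ x :=
    hΓ.mul_dotProduct_self_le_dotProduct_inv_mulVec (by positivity) fun x => by linarith [hΓle x]
  set V := fun t => adaptiveLyapunov kp γ Γ (θ t - θs) (ρ t - kp)
  have hdot (x : Fin N → ℝ) : 0 ≤ x ⬝ᵥ x := (sq_nonneg _).trans (sq_norm_le_dotProduct_self x)
  have hV : Antitone V := antitone_nat_of_succ_le fun t => by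
    have hm2 : m t ^ 2 = 1 + ζ t ⬝ᵥ ζ t + ξ t ^ 2 := by
      rw [hm t]
      exact Real.sq_sqrt (by positivity [hdot (ζ t)] : (0 : ℝ) ≤ 1 + ζ t ⬝ᵥ ζ t + ξ t ^ 2)
    have hS : |kp| * (ζ t ⬝ᵥ Γ *ᵥ ζ t) + γ * ξ t ^ 2 ≤ 2 * m t ^ 2 := by
      linarith [hΓle (ζ t), mul_le_mul_of_nonneg_right hγ2.le (sq_nonneg (ξ t))]
    have hθstep : θ (t + 1) - θs = (θ t - θs) - (Real.sign kp * ε t / m t ^ 2) • Γ *ᵥ ζ t := by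
      rw [hθ t, sub_right_comm]
    have hρstep : ρ (t + 1) - kp = (ρ t - kp) - γ * ξ t * ε t / m t ^ 2 := by
      rw [hρ t, sub_right_comm]
    simp only [V, hθstep, hρstep]
    exact adaptiveLyapunov_update_le (isHermitian_iff_isSymm.mp hΓ.isHermitian) hΓ.isUnit hkp
      hγ1.ne' (by rw [hm2]; positivity [hdot (ζ t)]) hS (hε t)
  refine ⟨exists_forall_norm_le_of_sq_norm_sub_le θs (B := V 0 / (|kp| * (|kp| / 2))) fun t => ?_,
    exists_forall_norm_le_of_sq_norm_sub_le kp (B := γ * V 0) fun t => ?_⟩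
  · exact (sq_norm_le_adaptiveLyapunov_div hkp (by positivity) hγ1.le (hinv _)).trans
      (div_le_div_of_nonneg_right (hV (Nat.zero_le t)) (by positivity))
  · have hφ := (hinv (θ t - θs)).trans' (mul_nonneg (by positivity) (hdot _))
    rw [Real.norm_eq_abs, sq_abs]
    exact (sq_le_mul_adaptiveLyapunov hγ1 hφ).trans
      (mul_le_mul_of_nonneg_left (hV (Nat.zero_le t)) hγ1.le)

/-- SISO discrete-time adaptive law (Lemma 2.1): under `Γ < (2/|k_p|) I`,
the parameter estimates `θ` and `ρ` are uniformly bounded. -/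
theorem siso_discrete_adaptive_law_parameter_boundedness
    (N : ℕ) (hN : 0 < N)
    (ζ : ℕ → Fin N → ℝ) (ξ : ℕ → ℝ)
    (kp : ℝ) (hkp : kp ≠ 0)
    (θs : Fin N → ℝ)
    (Γ : Matrix (Fin N) (Fin N) ℝ) (hΓ : Γ.PosDef)
    (hΓ2 : ∀ x : Fin N → ℝ, x ≠ 0 →
      |kp| * (∑ i, x i * (Γ.mulVec x) i) < 2 * ∑ i, x i * x i)
    (γ : ℝ) (hγ1 : 0 < γ) (hγ2 : γ < 2)
    (θ : ℕ → Fin N → ℝ) (ρ : ℕ → ℝ)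
    (m ε : ℕ → ℝ)
    (hm : ∀ t, m t = Real.sqrt (1 + (∑ i, ζ t i * ζ t i) + ξ t ^ 2))
    (hε : ∀ t, ε t = kp * (∑ i, (θ t i - θs i) * ζ t i) + (ρ t - kp) * ξ t)
    (hθ : ∀ t, θ (t + 1) = θ t - (Real.sign kp * ε t / m t ^ 2) • Γ.mulVec (ζ t))
    (hρ : ∀ t, ρ (t + 1) = ρ t - γ * ξ t * ε t / m t ^ 2) :
    (∃ C : ℝ, ∀ t, ‖θ t‖ ≤ C) ∧ (∃ C : ℝ, ∀ t, |ρ t| ≤ C) :=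
  siso_discrete_adaptive_law_parameter_boundedness_general N ζ ξ kp hkp θs Γ hΓ hΓ2 γ hγ1 hγ2 θ ρ m
    ε hm hε hθ hρ
end

section
/- Under the MIMO discrete-time adaptive law setup, for every t ∈ ℕ, V(t+1) − V(t) ≤ −α₁ ε(t)ᵀε(t)/m(t)², where α₁ = 2 − max{λ_max(K_p S_p), λ_max(Γ)} > 0 and λ_max denotes the largest eigenvalue of a symmetric matrix. In particular V is nonincreasing. -/
/-!
With `Γ_p = K_pᵀ S_p⁻¹` symmetric, each adaptive law subtracts a rank-one matrix from the
parameter error, so each trace term of `V` changes by a cross term, linear in the correction, and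
a quadratic one. Because `ε = K_p Θ̃ᵀ ζ + Ψ̃ ξ`, the two cross terms add up to `-2 εᵀε / m²`; the
quadratic terms are `(εᵀ K_p S_p ε) |ζ|² / m⁴ + (εᵀ Γ ε) |ξ|² / m⁴`, which the Rayleigh bound and
`|ζ|² + |ξ|² ≤ m²` bound by `λ εᵀε / m²`, `λ = max (λ_max (K_p S_p)) (λ_max Γ)`. Finally `λ < 2`,
since on an eigenvector `v` the hypothesis `vᵀ A v < 2 vᵀ v` reads `λᵢ < 2`.
-/

open Matrix

namespace Matrix.IsHermitian

variable {n : Type*} [Fintype n] [DecidableEq n] {A : Matrix n n ℝ} (hA : A.IsHermitian)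

lemma sum_eigenvectorBasis_dotProduct_mul (x y : n → ℝ) :
    ∑ i, (⇑(hA.eigenvectorBasis i) ⬝ᵥ x) * (⇑(hA.eigenvectorBasis i) ⬝ᵥ y) = x ⬝ᵥ y := by
  have := hA.eigenvectorBasis.sum_inner_mul_inner (WithLp.toLp 2 x) (WithLp.toLp 2 y)
  simpa only [EuclideanSpace.inner_eq_star_dotProduct, star_trivial, dotProduct_comm y] using this

lemma dotProduct_mulVec_eq_sum_eigenvalues (x : n → ℝ) :
    x ⬝ᵥ A *ᵥ x = ∑ i, hA.eigenvalues i * (⇑(hA.eigenvectorBasis i) ⬝ᵥ x) ^ 2 := by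
  rw [← hA.sum_eigenvectorBasis_dotProduct_mul]
  refine Finset.sum_congr rfl fun i _ => ?_
  rw [dotProduct_mulVec, ← mulVec_transpose, (isHermitian_iff_isSymm.mp hA).eq,
    hA.mulVec_eigenvectorBasis, smul_dotProduct, smul_eq_mul]
  ring

lemma dotProduct_mulVec_le_iSup_eigenvalues_mul (x : n → ℝ) :
    x ⬝ᵥ A *ᵥ x ≤ (⨆ i, hA.eigenvalues i) * (x ⬝ᵥ x) := by
  rw [hA.dotProduct_mulVec_eq_sum_eigenvalues, ← hA.sum_eigenvectorBasis_dotProduct_mul,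
    Finset.mul_sum]
  exact Finset.sum_le_sum fun i _ => by
    rw [sq]
    exact mul_le_mul_of_nonneg_right (le_ciSup (Set.finite_range _).bddAbove i) (mul_self_nonneg _)

lemma eigenvalues_lt_of_dotProduct_mulVec_lt {c : ℝ}
    (h : ∀ x, x ≠ 0 → x ⬝ᵥ A *ᵥ x < c * (x ⬝ᵥ x)) (i : n) : hA.eigenvalues i < c := by
  have hb : ⇑(hA.eigenvectorBasis i) ≠ 0 := by
    simpa using hA.eigenvectorBasis.orthonormal.ne_zero i
  have hlt := h _ hb
  rw [mulVec_eigenvectorBasis, dotProduct_smul, smul_eq_mul] at hlt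
  exact lt_of_mul_lt_mul_right hlt (Finset.sum_nonneg fun _ _ => mul_self_nonneg _)

lemma iSup_eigenvalues_lt {c : ℝ} (hc : 0 < c)
    (h : ∀ x, x ≠ 0 → x ⬝ᵥ A *ᵥ x < c * (x ⬝ᵥ x)) : ⨆ i, hA.eigenvalues i < c := by
  cases isEmpty_or_nonempty n
  · rwa [Real.iSup_of_isEmpty]
  · obtain ⟨i, hi⟩ := exists_eq_ciSup_of_finite (f := hA.eigenvalues)
    exact hi ▸ hA.eigenvalues_lt_of_dotProduct_mulVec_lt h i

end Matrix.IsHermitian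

namespace Matrix

variable {R : Type*} [CommRing R] {n p : Type*} [Fintype n] [Fintype p]

lemma trace_transpose_mul_mul_vecMulVec (Y : Matrix p n R) (G : Matrix p p R) (u : p → R)
    (z : n → R) :
    trace (Yᵀ * G * vecMulVec u z) = z ⬝ᵥ Yᵀ *ᵥ G *ᵥ u := by
  rw [mul_vecMulVec, trace_vecMulVec, ← mulVec_mulVec, dotProduct_comm]

lemma trace_sub_smul_vecMulVec_transpose_mul_mul {G : Matrix p p R} (hG : G.IsSymm)
    (Y : Matrix p n R) (a : R) (u : p → R) (z : n → R) :
    trace ((Y - a • vecMulVec u z)ᵀ * G * (Y - a • vecMulVec u z)) =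
      trace (Yᵀ * G * Y) - 2 * a * (z ⬝ᵥ Yᵀ *ᵥ G *ᵥ u) + a ^ 2 * (z ⬝ᵥ z) * (u ⬝ᵥ G *ᵥ u) := by
  have hcross : trace ((vecMulVec u z)ᵀ * G * Y) = z ⬝ᵥ Yᵀ *ᵥ G *ᵥ u := by
    rw [← trace_transpose, transpose_mul, transpose_mul, transpose_transpose, hG.eq,
      ← Matrix.mul_assoc, trace_transpose_mul_mul_vecMulVec]
  have hsq : trace ((vecMulVec u z)ᵀ * G * vecMulVec u z) = (z ⬝ᵥ z) * (u ⬝ᵥ G *ᵥ u) := by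
    rw [trace_transpose_mul_mul_vecMulVec, transpose_vecMulVec, vecMulVec_mulVec]
    simp [dotProduct_smul, mul_comm]
  simp only [transpose_sub, transpose_smul, Matrix.sub_mul, Matrix.mul_sub, Matrix.smul_mul,
    Matrix.mul_smul, trace_sub, trace_smul, smul_eq_mul, hcross, hsq,
    trace_transpose_mul_mul_vecMulVec]
  ring

lemma IsSymm.transpose_mul_inv [DecidableEq p] {K S : Matrix p p R} (hKS : (K * S).IsSymm)
    (hS : IsUnit S.det) : (Kᵀ * S⁻¹).IsSymm := by
  have hK : Kᵀ = S⁻¹ᵀ * K * S := by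
    rw [Matrix.mul_assoc, ← hKS.eq, transpose_mul, ← Matrix.mul_assoc, ← transpose_mul,
      mul_nonsing_inv _ hS, transpose_one, Matrix.one_mul]
  rw [IsSymm, transpose_mul, transpose_transpose, hK, Matrix.mul_assoc, Matrix.mul_assoc,
    mul_nonsing_inv _ hS, Matrix.mul_one]

lemma trace_sub_smul_vecMulVec_mulVec_transpose_mul_mul [DecidableEq p] {K S : Matrix p p R}
    (hKS : (K * S).IsSymm) (hS : IsUnit S.det) (Y : Matrix p n R) (a : R) (e : p → R)
    (z : n → R) :
    trace ((Y - a • vecMulVec (S *ᵥ e) z)ᵀ * (Kᵀ * S⁻¹) * (Y - a • vecMulVec (S *ᵥ e) z)) =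
      trace (Yᵀ * (Kᵀ * S⁻¹) * Y) - 2 * a * (e ⬝ᵥ K *ᵥ Y *ᵥ z)
        + a ^ 2 * (z ⬝ᵥ z) * (e ⬝ᵥ (K * S) *ᵥ e) := by
  have hGSe : (Kᵀ * S⁻¹) *ᵥ S *ᵥ e = Kᵀ *ᵥ e := by
    rw [mulVec_mulVec, Matrix.mul_assoc, nonsing_inv_mul _ hS, Matrix.mul_one]
  rw [trace_sub_smul_vecMulVec_transpose_mul_mul (hKS.transpose_mul_inv hS), hGSe,
    mulVec_mulVec, ← transpose_mul, mulVec_transpose, dotProduct_comm z, ← dotProduct_mulVec,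
    dotProduct_comm (S *ᵥ e), mulVec_transpose, ← dotProduct_mulVec]
  simp only [mulVec_mulVec]

end Matrix

lemma lyapunov_step_eq {R : Type*} [CommRing R] {n p : Type*} [Fintype n] [Fintype p]
    [DecidableEq p]
    {Kp Sp Γ : Matrix p p R} (hKS : (Kp * Sp).IsSymm) (hSp : IsUnit Sp.det) (hΓ : Γ.IsSymm)
    (hΓdet : IsUnit Γ.det) (X X' : Matrix p n R) (Q Q' : Matrix p p R) (ζ : n → R) (ξ : p → R)
    (a : R) (e : p → R) (he : e = Kp *ᵥ X *ᵥ ζ + Q *ᵥ ξ)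
    (hX' : X' = X - a • vecMulVec (Sp *ᵥ e) ζ) (hQ' : Q' = Q - a • vecMulVec (Γ *ᵥ e) ξ) :
    trace (X'ᵀ * (Kpᵀ * Sp⁻¹) * X') + trace (Q'ᵀ * Γ⁻¹ * Q')
      - (trace (Xᵀ * (Kpᵀ * Sp⁻¹) * X) + trace (Qᵀ * Γ⁻¹ * Q)) =
      -2 * a * (e ⬝ᵥ e)
        + a ^ 2 * ((e ⬝ᵥ (Kp * Sp) *ᵥ e) * (ζ ⬝ᵥ ζ) + (e ⬝ᵥ Γ *ᵥ e) * (ξ ⬝ᵥ ξ)) := by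
  have hΘ := trace_sub_smul_vecMulVec_mulVec_transpose_mul_mul hKS hSp X a e ζ
  -- the `Ψ`-law is the `Θ`-law with `K = 1`, `S = Γ`
  have hΨ := trace_sub_smul_vecMulVec_mulVec_transpose_mul_mul (K := 1) (by simpa using hΓ)
    hΓdet Q a e ξ
  simp only [transpose_one, Matrix.one_mul, one_mulVec] at hΨ
  have hee : e ⬝ᵥ e = e ⬝ᵥ Kp *ᵥ X *ᵥ ζ + e ⬝ᵥ Q *ᵥ ξ := by rw [← dotProduct_add, ← he]
  rw [hX', hQ', hΘ, hΨ, hee]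
  ring

lemma neg_two_mul_inv_add_inv_sq_mul_le {s z y q₁ q₂ c : ℝ} (hs : 0 ≤ s) (hz : 0 ≤ z)
    (hy : 0 ≤ y) (hc : 0 ≤ c) (hq₁ : q₁ ≤ c * s) (hq₂ : q₂ ≤ c * s) :
    -2 * (1 + z + y)⁻¹ * s + ((1 + z + y)⁻¹) ^ 2 * (q₁ * z + q₂ * y) ≤
      -(2 - c) * (s / (1 + z + y)) := by
  set μ := 1 + z + y
  have hμ : 0 < μ := by positivity
  have hq : q₁ * z + q₂ * y ≤ c * s * μ := by nlinarith [mul_nonneg hc hs]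
  have hq' : μ⁻¹ ^ 2 * (q₁ * z + q₂ * y) ≤ c * s * μ⁻¹ := calc
    μ⁻¹ ^ 2 * (q₁ * z + q₂ * y) ≤ μ⁻¹ ^ 2 * (c * s * μ) := by gcongr
    _ = c * s * μ⁻¹ := by field_simp
  rw [div_eq_mul_inv]
  linarith

theorem mimo_discrete_lyapunov_decrement_bound_general
    (N M : ℕ)
    (ζ : ℕ → Fin N → ℝ) (ξ : ℕ → Fin M → ℝ)
    (m : ℕ → ℝ)
    (hm : ∀ t, m t = Real.sqrt (1 + (∑ i, ζ t i * ζ t i) + ∑ j, ξ t j * ξ t j))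
    (Kp Sp : Matrix (Fin M) (Fin M) ℝ) (hSp : IsUnit Sp.det)
    (hKS : (Kp * Sp).PosDef)
    (hKS2 : ∀ x : Fin M → ℝ, x ≠ 0 →
      (∑ i, x i * ((Kp * Sp).mulVec x) i) < 2 * ∑ i, x i * x i)
    (Γ : Matrix (Fin M) (Fin M) ℝ) (hΓ : Γ.PosDef)
    (hΓ2 : ∀ x : Fin M → ℝ, x ≠ 0 →
      (∑ i, x i * (Γ.mulVec x) i) < 2 * ∑ i, x i * x i)
    (Θs : Matrix (Fin N) (Fin M) ℝ)
    (Θ : ℕ → Matrix (Fin N) (Fin M) ℝ) (Ψ : ℕ → Matrix (Fin M) (Fin M) ℝ)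
    (ε : ℕ → Fin M → ℝ)
    (hε : ∀ t, ε t = Kp.mulVec ((Θ t - Θs)ᵀ.mulVec (ζ t)) + (Ψ t - Kp).mulVec (ξ t))
    (hΘlaw : ∀ t, (Θ (t + 1))ᵀ =
      (Θ t)ᵀ - (m t ^ 2)⁻¹ • Matrix.vecMulVec (Sp.mulVec (ε t)) (ζ t))
    (hΨlaw : ∀ t, Ψ (t + 1) =
      Ψ t - (m t ^ 2)⁻¹ • Matrix.vecMulVec (Γ.mulVec (ε t)) (ξ t))
    (V : ℕ → ℝ)
    (hV : ∀ t, V t = Matrix.trace ((Θ t - Θs) * (Kpᵀ * Sp⁻¹) * (Θ t - Θs)ᵀ)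
        + Matrix.trace ((Ψ t - Kp)ᵀ * Γ⁻¹ * (Ψ t - Kp))) :
    0 < 2 - max (⨆ i, hKS.1.eigenvalues i) (⨆ i, hΓ.1.eigenvalues i) ∧
    (∀ t, V (t + 1) - V t ≤
      -(2 - max (⨆ i, hKS.1.eigenvalues i) (⨆ i, hΓ.1.eigenvalues i))
        * ((∑ j, ε t j * ε t j) / m t ^ 2)) ∧
    ∀ t, V (t + 1) ≤ V t := by
  have hKSsymm : (Kp * Sp).IsSymm := isHermitian_iff_isSymm.mp hKS.1
  have hΓsymm : Γ.IsSymm := isHermitian_iff_isSymm.mp hΓ.1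
  have hsq : ∀ {k : ℕ} (v : Fin k → ℝ), 0 ≤ ∑ i, v i * v i := fun v =>
    Finset.sum_nonneg fun _ _ => mul_self_nonneg _
  set c := max (⨆ i, hKS.1.eigenvalues i) (⨆ i, hΓ.1.eigenvalues i)
  have hc : 0 < 2 - c := sub_pos.2 <|
    max_lt (hKS.1.iSup_eigenvalues_lt two_pos hKS2) (hΓ.1.iSup_eigenvalues_lt two_pos hΓ2)
  have hc₀ : 0 ≤ c := le_max_of_le_left (Real.iSup_nonneg fun i => (hKS.eigenvalues_pos i).le)
  have hdec : ∀ t, V (t + 1) - V t ≤ -(2 - c) * ((∑ j, ε t j * ε t j) / m t ^ 2) := by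
    intro t
    have hstep := lyapunov_step_eq hKSsymm hSp hΓsymm ((isUnit_iff_isUnit_det Γ).mp hΓ.isUnit)
      (Θ t - Θs)ᵀ (Θ (t + 1) - Θs)ᵀ (Ψ t - Kp) (Ψ (t + 1) - Kp) (ζ t) (ξ t) (m t ^ 2)⁻¹ (ε t)
      (hε t) (by rw [transpose_sub, transpose_sub, hΘlaw, sub_right_comm])
      (by rw [hΨlaw, sub_right_comm])
    simp only [transpose_transpose] at hstep
    rw [hV, hV, hstep, hm, Real.sq_sqrt (by linarith [hsq (ζ t), hsq (ξ t)])]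
    exact neg_two_mul_inv_add_inv_sq_mul_le (hsq _) (hsq _) (hsq _) hc₀
      ((hKS.1.dotProduct_mulVec_le_iSup_eigenvalues_mul _).trans
        (mul_le_mul_of_nonneg_right (le_max_left _ _) (hsq _)))
      ((hΓ.1.dotProduct_mulVec_le_iSup_eigenvalues_mul _).trans
        (mul_le_mul_of_nonneg_right (le_max_right _ _) (hsq _)))
  refine ⟨hc, hdec, fun t => ?_⟩
  linarith [hdec t, mul_nonneg hc.le (div_nonneg (hsq (ε t)) (sq_nonneg (m t)))]

/-- MIMO discrete-time adaptive laws: Lyapunov decrement bound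
`V(t+1) − V(t) ≤ −α₁ εᵀε/m²` with `α₁ = 2 − max{λ_max(K_p S_p), λ_max(Γ)} > 0`;
in particular `V` is nonincreasing. -/
theorem mimo_discrete_lyapunov_decrement_bound
    (N M : ℕ) (hN : 0 < N) (hM : 0 < M)
    (ζ : ℕ → Fin N → ℝ) (ξ : ℕ → Fin M → ℝ)
    (m : ℕ → ℝ)
    (hm : ∀ t, m t = Real.sqrt (1 + (∑ i, ζ t i * ζ t i) + ∑ j, ξ t j * ξ t j))
    (Kp Sp : Matrix (Fin M) (Fin M) ℝ) (hSp : IsUnit Sp.det)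
    (hKS : (Kp * Sp).PosDef)
    (hKS2 : ∀ x : Fin M → ℝ, x ≠ 0 →
      (∑ i, x i * ((Kp * Sp).mulVec x) i) < 2 * ∑ i, x i * x i)
    (Γ : Matrix (Fin M) (Fin M) ℝ) (hΓ : Γ.PosDef)
    (hΓ2 : ∀ x : Fin M → ℝ, x ≠ 0 →
      (∑ i, x i * (Γ.mulVec x) i) < 2 * ∑ i, x i * x i)
    (Θs : Matrix (Fin N) (Fin M) ℝ)
    (Θ : ℕ → Matrix (Fin N) (Fin M) ℝ) (Ψ : ℕ → Matrix (Fin M) (Fin M) ℝ)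
    (ε : ℕ → Fin M → ℝ)
    (hε : ∀ t, ε t = Kp.mulVec ((Θ t - Θs)ᵀ.mulVec (ζ t)) + (Ψ t - Kp).mulVec (ξ t))
    (hΘlaw : ∀ t, (Θ (t + 1))ᵀ =
      (Θ t)ᵀ - (m t ^ 2)⁻¹ • Matrix.vecMulVec (Sp.mulVec (ε t)) (ζ t))
    (hΨlaw : ∀ t, Ψ (t + 1) =
      Ψ t - (m t ^ 2)⁻¹ • Matrix.vecMulVec (Γ.mulVec (ε t)) (ξ t))
    (V : ℕ → ℝ)
    (hV : ∀ t, V t = Matrix.trace ((Θ t - Θs) * (Kpᵀ * Sp⁻¹) * (Θ t - Θs)ᵀ)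
        + Matrix.trace ((Ψ t - Kp)ᵀ * Γ⁻¹ * (Ψ t - Kp))) :
    0 < 2 - max (⨆ i, hKS.1.eigenvalues i) (⨆ i, hΓ.1.eigenvalues i) ∧
    (∀ t, V (t + 1) - V t ≤
      -(2 - max (⨆ i, hKS.1.eigenvalues i) (⨆ i, hΓ.1.eigenvalues i))
        * ((∑ j, ε t j * ε t j) / m t ^ 2)) ∧
    ∀ t, V (t + 1) ≤ V t :=
  mimo_discrete_lyapunov_decrement_bound_general N M ζ ξ m hm Kp Sp hSp hKS hKS2 Γ hΓ hΓ2 Θs Θ Ψ ε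
    hε hΘlaw hΨlaw V hV
end

section
/- Under the relative-degree-one Lyapunov-design setup, the function V(t) = e(t)ᵀ P e(t) + tr[(Θ(t) − Θ*) M_s⁻¹ (Θ(t) − Θ*)ᵀ], with M_s = K_p⁻¹ S, is differentiable and satisfies dV/dt (t) = −e(t)ᵀ Q e(t) ≤ 0 for every t. -/
open Matrix BigOperators

/-!
Write `Θ̃ = Θ - Θ*` and `B = M_s⁻¹`. Since `P` is symmetric, the derivative of `eᵀ P e` along
`e' = A₀ e + K_p Θ̃ᵀ ω` is `eᵀ (P A₀ + A₀ᵀ P) e + 2 (K_p Θ̃ᵀ ω)ᵀ P e = -eᵀ Q e + 2 (K_p Θ̃ᵀ ω)ᵀ P e`.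
Since `B` is symmetric and `S B = K_p`, the derivative of `tr (Θ̃ B Θ̃ᵀ)` under the adaptive law
is `-2 (K_p Θ̃ᵀ ω)ᵀ P e`, so the cross terms cancel.
-/

section

variable {m n : Type*} [Fintype m] [Fintype n] {t : ℝ}

theorem hasDerivAt_dotProduct_mulVec (A : Matrix m n ℝ) {x : ℝ → m → ℝ} {y : ℝ → n → ℝ}
    {x' : m → ℝ} {y' : n → ℝ} (hx : ∀ i, HasDerivAt (fun s => x s i) (x' i) t)
    (hy : ∀ j, HasDerivAt (fun s => y s j) (y' j) t) :
    HasDerivAt (fun s => x s ⬝ᵥ (A *ᵥ y s)) (x' ⬝ᵥ (A *ᵥ y t) + x t ⬝ᵥ (A *ᵥ y')) t := by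
  simp only [dotProduct, mulVec, ← Finset.sum_add_distrib]
  exact HasDerivAt.fun_sum fun i _ =>
    (hx i).mul (HasDerivAt.fun_sum fun j _ => (hy j).const_mul (A i j))

theorem trace_mul_mul_transpose (X : Matrix m n ℝ) (B : Matrix n n ℝ) (Y : Matrix m n ℝ) :
    trace (X * B * Yᵀ) = ∑ i, X i ⬝ᵥ (B *ᵥ Y i) := by
  simp only [trace, diag, mul_apply, transpose_apply, dotProduct, mulVec, Finset.sum_mul,
    Finset.mul_sum]
  exact Finset.sum_congr rfl fun i _ =>
    Finset.sum_comm.trans (by simp only [mul_comm, mul_left_comm])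

theorem hasDerivAt_trace_mul_mul_transpose (B : Matrix n n ℝ) {X Y : ℝ → Matrix m n ℝ}
    {X' Y' : Matrix m n ℝ} (hX : ∀ i j, HasDerivAt (fun s => X s i j) (X' i j) t)
    (hY : ∀ i j, HasDerivAt (fun s => Y s i j) (Y' i j) t) :
    HasDerivAt (fun s => trace (X s * B * (Y s)ᵀ))
      (trace (X' * B * (Y t)ᵀ) + trace (X t * B * Y'ᵀ)) t := by
  simp only [trace_mul_mul_transpose, ← Finset.sum_add_distrib]
  exact HasDerivAt.fun_sum fun i _ => hasDerivAt_dotProduct_mulVec B (hX i) (hY i)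

theorem dotProduct_mulVec_comm_of_isSymm {P : Matrix n n ℝ} (hP : P.IsSymm) (x y : n → ℝ) :
    x ⬝ᵥ (P *ᵥ y) = y ⬝ᵥ (P *ᵥ x) := by
  have h := dotProduct_transpose_mulVec P x y
  rwa [hP.eq] at h

theorem quadratic_form_deriv_of_lyapunov_eq {A P Q : Matrix n n ℝ} (hP : P.IsSymm)
    (hPA : P * A + Aᵀ * P = -Q) (e w : n → ℝ) :
    (A *ᵥ e + w) ⬝ᵥ (P *ᵥ e) + e ⬝ᵥ (P *ᵥ (A *ᵥ e + w))
      = -(e ⬝ᵥ (Q *ᵥ e)) + 2 * (w ⬝ᵥ (P *ᵥ e)) := by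
  have hPA_e : (A *ᵥ e) ⬝ᵥ (P *ᵥ e) = e ⬝ᵥ ((P * A) *ᵥ e) := by
    rw [← mulVec_mulVec, dotProduct_mulVec_comm_of_isSymm hP]
  have hAP_e : (A *ᵥ e) ⬝ᵥ (P *ᵥ e) = e ⬝ᵥ ((Aᵀ * P) *ᵥ e) := by
    rw [← mulVec_mulVec, dotProduct_transpose_mulVec, dotProduct_comm]
  have hQ_e : e ⬝ᵥ ((P * A) *ᵥ e) + e ⬝ᵥ ((Aᵀ * P) *ᵥ e) = -(e ⬝ᵥ (Q *ᵥ e)) := by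
    rw [← dotProduct_add, ← add_mulVec, hPA, neg_mulVec, dotProduct_neg]
  rw [dotProduct_mulVec_comm_of_isSymm hP e, add_dotProduct]
  linarith

theorem trace_deriv_of_adaptive_law {B S K : Matrix n n ℝ} (hB : B.IsSymm) (hSB : S * B = K)
    (Θ Θ' : Matrix m n ℝ) (u : n → ℝ) (ω : m → ℝ) (hΘ' : Θ'ᵀ = -vecMulVec (Sᵀ *ᵥ u) ω) :
    trace (Θ' * B * Θᵀ) + trace (Θ * B * Θ'ᵀ) = -(2 * ((K *ᵥ (Θᵀ *ᵥ ω)) ⬝ᵥ u)) := by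
  have hswap : trace (Θ' * B * Θᵀ) = trace (Θ * B * Θ'ᵀ) := by
    rw [← trace_transpose, transpose_mul, transpose_mul, transpose_transpose, hB.eq,
      Matrix.mul_assoc]
  have hBS : B * Sᵀ = Kᵀ := by rw [← hSB, transpose_mul, hB.eq]
  have htr : trace (Θ * B * Θ'ᵀ) = -((K *ᵥ (Θᵀ *ᵥ ω)) ⬝ᵥ u) := by
    rw [hΘ', Matrix.mul_neg, trace_neg, mul_vecMulVec, trace_vecMulVec, mulVec_mulVec,
      Matrix.mul_assoc, hBS, ← mulVec_mulVec, dotProduct_comm (K *ᵥ _), dotProduct_mulVec u K,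
      ← mulVec_transpose, dotProduct_transpose_mulVec, dotProduct_comm]
  rw [hswap, htr]
  ring

theorem mul_inv_inv_mul {K S : Matrix n n ℝ} [DecidableEq n] (hK : IsUnit K.det)
    (hKS : IsUnit (K⁻¹ * S).det) : S * (K⁻¹ * S)⁻¹ = K := by
  have hS : IsUnit S.det := isUnit_of_mul_isUnit_right (det_mul K⁻¹ S ▸ hKS)
  rw [Matrix.mul_inv_rev, nonsing_inv_nonsing_inv K hK, ← Matrix.mul_assoc, mul_nonsing_inv S hS,
    Matrix.one_mul]

end

theorem relative_degree_one_lyapunov_derivative_general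
    (N M : ℕ)
    (A0 : Matrix (Fin M) (Fin M) ℝ)
    (P Q : Matrix (Fin M) (Fin M) ℝ) (hP : P.PosDef) (hQ : Q.PosDef)
    (hPA : P * A0 + A0ᵀ * P = -Q)
    (Kp S : Matrix (Fin M) (Fin M) ℝ) (hKp : IsUnit Kp.det)
    (hMs : (Kp⁻¹ * S).PosDef)
    (Θs : Matrix (Fin N) (Fin M) ℝ)
    (ω : ℝ → Fin N → ℝ)
    (e e' : ℝ → Fin M → ℝ)
    (Θ Θ' : ℝ → Matrix (Fin N) (Fin M) ℝ)
    (hed : ∀ t j, HasDerivAt (fun s => e s j) (e' t j) t)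
    (hΘd : ∀ t i j, HasDerivAt (fun s => Θ s i j) (Θ' t i j) t)
    (helaw : ∀ t, e' t = A0.mulVec (e t) + Kp.mulVec ((Θ t - Θs)ᵀ.mulVec (ω t)))
    (hΘlaw : ∀ t, (Θ' t)ᵀ = -Matrix.vecMulVec (Sᵀ.mulVec (P.mulVec (e t))) (ω t))
    (V : ℝ → ℝ)
    (hV : ∀ t, V t = (∑ j, e t j * (P.mulVec (e t)) j)
        + Matrix.trace ((Θ t - Θs) * (Kp⁻¹ * S)⁻¹ * (Θ t - Θs)ᵀ)) :
    ∀ t, HasDerivAt V (-(∑ j, e t j * (Q.mulVec (e t)) j)) t ∧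
      -(∑ j, e t j * (Q.mulVec (e t)) j) ≤ 0 := by
  intro t
  change HasDerivAt V (-(e t ⬝ᵥ (Q *ᵥ e t))) t ∧ -(e t ⬝ᵥ (Q *ᵥ e t)) ≤ 0
  have hSB : S * (Kp⁻¹ * S)⁻¹ = Kp :=
    mul_inv_inv_mul hKp (isUnit_iff_ne_zero.2 hMs.det_pos.ne')
  have hΘd' : ∀ i j, HasDerivAt (fun s => (Θ s - Θs) i j) (Θ' t i j) t :=
    fun i j => (hΘd t i j).sub_const (Θs i j)
  have hder := (hasDerivAt_dotProduct_mulVec P (hed t) (hed t)).add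
    (hasDerivAt_trace_mul_mul_transpose (Kp⁻¹ * S)⁻¹ hΘd' hΘd')
  rw [helaw t, quadratic_form_deriv_of_lyapunov_eq (isHermitian_iff_isSymm.1 hP.1) hPA,
    trace_deriv_of_adaptive_law (isHermitian_iff_isSymm.1 hMs.inv.1) hSB _ _ _ _ (hΘlaw t)]
    at hder
  refine ⟨funext hV ▸ hder.congr_deriv (by ring), ?_⟩
  simpa using hQ.posSemidef.dotProduct_mulVec_nonneg (e t)

/-- Relative-degree-one Lyapunov design: the function
`V = eᵀ P e + tr[(Θ − Θ*) M_s⁻¹ (Θ − Θ*)ᵀ]` with `M_s = K_p⁻¹ S` is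
differentiable and satisfies `dV/dt = −eᵀ Q e ≤ 0`. -/
theorem relative_degree_one_lyapunov_derivative
    (N M : ℕ) (hN : 0 < N) (hM : 0 < M)
    (A0 : Matrix (Fin M) (Fin M) ℝ)
    (P Q : Matrix (Fin M) (Fin M) ℝ) (hP : P.PosDef) (hQ : Q.PosDef)
    (hPA : P * A0 + A0ᵀ * P = -Q)
    (Kp S : Matrix (Fin M) (Fin M) ℝ) (hKp : IsUnit Kp.det)
    (hMs : (Kp⁻¹ * S).PosDef)
    (Θs : Matrix (Fin N) (Fin M) ℝ)
    (ω : ℝ → Fin N → ℝ) (hωc : ∀ i, Continuous fun t => ω t i)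
    (e e' : ℝ → Fin M → ℝ)
    (Θ Θ' : ℝ → Matrix (Fin N) (Fin M) ℝ)
    (hed : ∀ t j, HasDerivAt (fun s => e s j) (e' t j) t)
    (hΘd : ∀ t i j, HasDerivAt (fun s => Θ s i j) (Θ' t i j) t)
    (helaw : ∀ t, e' t = A0.mulVec (e t) + Kp.mulVec ((Θ t - Θs)ᵀ.mulVec (ω t)))
    (hΘlaw : ∀ t, (Θ' t)ᵀ = -Matrix.vecMulVec (Sᵀ.mulVec (P.mulVec (e t))) (ω t))
    (V : ℝ → ℝ)
    (hV : ∀ t, V t = (∑ j, e t j * (P.mulVec (e t)) j)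
        + Matrix.trace ((Θ t - Θs) * (Kp⁻¹ * S)⁻¹ * (Θ t - Θs)ᵀ)) :
    ∀ t, HasDerivAt V (-(∑ j, e t j * (Q.mulVec (e t)) j)) t ∧
      -(∑ j, e t j * (Q.mulVec (e t)) j) ≤ 0 :=
  relative_degree_one_lyapunov_derivative_general N M A0 P Q hP hQ hPA Kp S hKp hMs Θs ω e e' Θ Θ'
    hed hΘd helaw hΘlaw V hV
end
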